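/- Let I, J ⊆ [n] be nonempty with |I| ≥ |J|. Then I and J are strongly separated if and only if h(I, J) = |I ∩ J| or h(J, I) = |I ∩ J|. -/

import Mathlib

/-- `allLt A B` means every element of `A` is smaller than every element of `B`
(vacuously true if `A` or `B` is empty). -/
def allLt (A B : Finset ℕ) : Prop := ∀ a ∈ A, ∀ b ∈ B, a < b

/-- `I` and `J` are strongly separated if `I \ J < J \ I` or `J \ I < I \ J`. -/
def StronglySeparated (I J : Finset ℕ) : Prop :=
  allLt (I \ J) (J \ I) ∨ allLt (J \ I) (I \ J)

/-- `S(I,d)`: the set of the `d` smallest elements of `I`. -/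
def smallSet (I : Finset ℕ) (d : ℕ) : Finset ℕ := ((Finset.sort I (· ≤ ·)).take d).toFinset

/-- `E(I,d)`: the set of the `d` largest elements of `I`. -/
def largeSet (I : Finset ℕ) (d : ℕ) : Finset ℕ :=
  ((Finset.sort I (· ≤ ·)).drop (I.card - d)).toFinset

/-- `A ⪯ B`: the sets have the same cardinality `d` and for each `1 ≤ s ≤ d`
the `s`-th smallest element of `A` is at most the `s`-th smallest element of `B`. -/
def PrecLE (A B : Finset ℕ) : Prop :=
  A.card = B.card ∧
  ∀ s < A.card, (Finset.sort A (· ≤ ·)).getD s 0 ≤ (Finset.sort B (· ≤ ·)).getD s 0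

/-- `h(I,J) = max{ d : 0 ≤ d ≤ min(|I|,|J|) and S(I,d) ⪯ E(J,d) }`.
In the paper this equals `dim Hom_D(M_I, M_J)` for rank one modules over the
Auslander algebra `D` of `ℂ[t]/(tⁿ)`. -/
noncomputable def homDim (I J : Finset ℕ) : ℕ :=
  sSup {d | d ≤ min I.card J.card ∧ PrecLE (smallSet I d) (largeSet J d)}

/-! ### Auxiliary lemmas -/

private lemma sorted_getD_mono {l : List ℕ} (h : l.Pairwise (· ≤ ·)) {i j : ℕ}
    (hij : i ≤ j) (hj : j < l.length) : l.getD i 0 ≤ l.getD j 0 := by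
  rw [List.getD_eq_getElem _ 0 (lt_of_le_of_lt hij hj), List.getD_eq_getElem _ 0 hj]
  exact h.rel_get_of_le (a := ⟨i, lt_of_le_of_lt hij hj⟩) (b := ⟨j, hj⟩) hij

/-- If `l₁` is a sublist of a sorted list `l₂`, the `s`-th element of `l₂` is at most
the `s`-th element of `l₁`. -/
private lemma sublist_getD_le {l₁ l₂ : List ℕ} (h : List.Sublist l₁ l₂) (hs2 : l₂.Pairwise (· ≤ ·)) :
    ∀ s < l₁.length, l₂.getD s 0 ≤ l₁.getD s 0 := by
  induction h with
  | slnil => intro s hs; simp at hs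
  | @cons l₁ l₂ a h ih =>
      intro s hs
      have hsort2 : l₂.Pairwise (· ≤ ·) := (List.pairwise_cons.mp hs2).2
      have hlen : s < l₂.length := lt_of_lt_of_le hs h.length_le
      have h1 : (a :: l₂).getD s 0 ≤ (a :: l₂).getD (s + 1) 0 :=
        sorted_getD_mono hs2 (Nat.le_succ s) (by simpa using hlen)
      have h2 : (a :: l₂).getD (s + 1) 0 = l₂.getD s 0 := List.getD_cons_succ
      exact le_trans (h1.trans (le_of_eq h2)) (ih hsort2 s hs)
  | @cons_cons l₁ l₂ a h ih =>
      intro s hs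
      cases s with
      | zero => simp
      | succ s =>
          rw [List.getD_cons_succ, List.getD_cons_succ]
          exact ih (List.pairwise_cons.mp hs2).2 s (by simpa using hs)

private lemma length_filter_sort (X : Finset ℕ) (P : ℕ → Prop) [DecidablePred P] :
    ((Finset.sort X (· ≤ ·)).filter (fun y => decide (P y))).length = (X.filter P).card := by
  have hnd : ((Finset.sort X (· ≤ ·)).filter (fun y => decide (P y))).Nodup :=
    List.filter_sublist.nodup (Finset.sort_nodup _ _)
  rw [← List.toFinset_card_of_nodup hnd, List.toFinset_filter, Finset.sort_toFinset]
  congr 1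
  apply Finset.filter_congr
  intro x _
  simp

private lemma getD_sort_mem (X : Finset ℕ) {s : ℕ} (hs : s < X.card) :
    (Finset.sort X (· ≤ ·)).getD s 0 ∈ X := by
  have hlen : s < (Finset.sort X (· ≤ ·)).length := by rwa [Finset.length_sort]
  rw [List.getD_eq_getElem _ 0 hlen]
  exact (Finset.mem_sort _).mp (List.getElem_mem hlen)

private lemma rank_aux (X : Finset ℕ) (P : ℕ → Prop) [DecidablePred P] {s : ℕ}
    (hs : s < (X.filter P).card) :
    ∃ y, P y ∧ (Finset.sort X (· ≤ ·)).getD s 0 ≤ y := by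
  set l := Finset.sort X (· ≤ ·) with hl
  set lf := l.filter (fun y => decide (P y)) with hlf
  have hlen : lf.length = (X.filter P).card := length_filter_sort X P
  have hs' : s < lf.length := by omega
  refine ⟨lf.getD s 0, ?_, ?_⟩
  · have hmem : lf.getD s 0 ∈ lf := by
      rw [List.getD_eq_getElem _ 0 hs']; exact List.getElem_mem hs'
    have := List.mem_filter.mp hmem
    simpa using this.2
  · exact sublist_getD_le (List.filter_sublist (l := l)) (Finset.pairwise_sort _ _) s hs'

private lemma rankLeAux (X : Finset ℕ) {x s : ℕ} (hs : s < (X.filter (· ≤ x)).card) :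
    (Finset.sort X (· ≤ ·)).getD s 0 ≤ x := by
  obtain ⟨y, hy, hle⟩ := rank_aux X (· ≤ x) hs
  exact hle.trans hy

private lemma rankLtAux (X : Finset ℕ) {x s : ℕ} (hs : s < (X.filter (· < x)).card) :
    (Finset.sort X (· ≤ ·)).getD s 0 < x := by
  obtain ⟨y, hy, hle⟩ := rank_aux X (· < x) hs
  exact lt_of_le_of_lt hle hy

private lemma le_getD_of_filter_le (X : Finset ℕ) {x s : ℕ} (hsX : s < X.card)
    (hf : (X.filter (· < x)).card ≤ s) : x ≤ (Finset.sort X (· ≤ ·)).getD s 0 := by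
  by_contra hcon
  push_neg at hcon
  set l := Finset.sort X (· ≤ ·) with hl
  have hlen : s < l.length := by rwa [hl, Finset.length_sort]
  have htake : ∀ a ∈ l.take (s + 1), a < x := by
    intro a ha
    obtain ⟨i, hi, hia⟩ := List.mem_iff_getElem.mp ha
    have hi' : i < s + 1 := lt_of_lt_of_le hi (by simp [List.length_take])
    have : l.getD i 0 ≤ l.getD s 0 := sorted_getD_mono (Finset.pairwise_sort _ _)
      (Nat.lt_succ_iff.mp hi') hlen
    have hgi : (l.take (s + 1))[i] = l[i]'(by omega) := List.getElem_take
    rw [← hia, hgi]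
    calc l[i]'(by omega) = l.getD i 0 := (List.getD_eq_getElem _ 0 (by omega)).symm
      _ ≤ l.getD s 0 := this
      _ < x := hcon
  have hsub : List.Sublist (l.take (s + 1)) (l.filter (fun y => decide (y < x))) := by
    have h1 : (l.take (s + 1)).filter (fun y => decide (y < x)) = l.take (s + 1) :=
      List.filter_eq_self.mpr (fun a ha => by simpa using htake a ha)
    rw [← h1]
    exact (List.take_sublist _ _).filter _
  have hle := hsub.length_le
  rw [List.length_take, length_filter_sort X (· < x)] at hle
  omega

/-- The combinatorial condition corresponding to `PrecLE (smallSet X d) (largeSet Y d)`. -/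
private def condH (X Y : Finset ℕ) (d : ℕ) : Prop :=
  ∀ s < d, (Finset.sort X (· ≤ ·)).getD s 0 ≤
    (Finset.sort Y (· ≤ ·)).getD (Y.card - d + s) 0

private lemma sort_smallSet (X : Finset ℕ) (d : ℕ) :
    Finset.sort (smallSet X d) (· ≤ ·) = (Finset.sort X (· ≤ ·)).take d := by
  apply (List.toFinset_sort _ _).mpr
  · exact List.Pairwise.sublist (List.take_sublist _ _) (Finset.pairwise_sort _ _)
  · exact (List.take_sublist _ _).nodup (Finset.sort_nodup _ _)

private lemma sort_largeSet (Y : Finset ℕ) (d : ℕ) :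
    Finset.sort (largeSet Y d) (· ≤ ·) = (Finset.sort Y (· ≤ ·)).drop (Y.card - d) := by
  apply (List.toFinset_sort _ _).mpr
  · exact List.Pairwise.sublist (List.drop_sublist _ _) (Finset.pairwise_sort _ _)
  · exact (List.drop_sublist _ _).nodup (Finset.sort_nodup _ _)

private lemma card_smallSet (X : Finset ℕ) {d : ℕ} (hd : d ≤ X.card) :
    (smallSet X d).card = d := by
  have := sort_smallSet X d
  calc (smallSet X d).card = (Finset.sort (smallSet X d) (· ≤ ·)).length :=
        (Finset.length_sort _).symm
    _ = d := by rw [this, List.length_take, Finset.length_sort]; omega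

private lemma card_largeSet (Y : Finset ℕ) {d : ℕ} (hd : d ≤ Y.card) :
    (largeSet Y d).card = d := by
  have := sort_largeSet Y d
  calc (largeSet Y d).card = (Finset.sort (largeSet Y d) (· ≤ ·)).length :=
        (Finset.length_sort _).symm
    _ = d := by rw [this, List.length_drop, Finset.length_sort]; omega

private lemma precLE_iff_cond {X Y : Finset ℕ} {d : ℕ} (hdX : d ≤ X.card) (hdY : d ≤ Y.card) :
    PrecLE (smallSet X d) (largeSet Y d) ↔ condH X Y d := by
  have hlX : ((Finset.sort X (· ≤ ·)).take d).length = d := by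
    rw [List.length_take, Finset.length_sort]; omega
  have hlY : ((Finset.sort Y (· ≤ ·)).drop (Y.card - d)).length = d := by
    rw [List.length_drop, Finset.length_sort]; omega
  have hget : ∀ s < d,
      ((Finset.sort (smallSet X d) (· ≤ ·)).getD s 0 ≤
        (Finset.sort (largeSet Y d) (· ≤ ·)).getD s 0 ↔
      (Finset.sort X (· ≤ ·)).getD s 0 ≤
        (Finset.sort Y (· ≤ ·)).getD (Y.card - d + s) 0) := by
    intro s hs
    rw [sort_smallSet, sort_largeSet]
    rw [List.getD_eq_getElem _ 0 (by omega), List.getD_eq_getElem _ 0 (by omega)]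
    rw [List.getElem_take, List.getElem_drop]
    rw [List.getD_eq_getElem _ 0 (by rw [Finset.length_sort]; omega),
      List.getD_eq_getElem _ 0 (by rw [Finset.length_sort]; omega)]
  constructor
  · intro ⟨_, h⟩ s hs
    exact (hget s hs).mp (h s (by rw [card_smallSet X hdX]; exact hs))
  · intro h
    refine ⟨by rw [card_smallSet X hdX, card_largeSet Y hdY], fun s hs => ?_⟩
    rw [card_smallSet X hdX] at hs
    exact (hget s hs).mpr (h s hs)

private lemma cond_mono {X Y : Finset ℕ} {d d' : ℕ} (hdd : d' ≤ d) (hdY : d ≤ Y.card)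
    (h : condH X Y d) : condH X Y d' := by
  intro s hs
  have h1 := h s (by omega)
  refine h1.trans (sorted_getD_mono (Finset.pairwise_sort _ _) (by omega) ?_)
  rw [Finset.length_sort]; omega

private lemma mem_homDim_set_iff {X Y : Finset ℕ} {d : ℕ} :
    d ∈ {d | d ≤ min X.card Y.card ∧ PrecLE (smallSet X d) (largeSet Y d)} ↔
      d ≤ min X.card Y.card ∧ condH X Y d := by
  constructor
  · rintro ⟨h1, h2⟩
    exact ⟨h1, (precLE_iff_cond (le_trans h1 (min_le_left _ _))
      (le_trans h1 (min_le_right _ _))).mp h2⟩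
  · rintro ⟨h1, h2⟩
    exact ⟨h1, (precLE_iff_cond (le_trans h1 (min_le_left _ _))
      (le_trans h1 (min_le_right _ _))).mpr h2⟩

private lemma homDim_spec (X Y : Finset ℕ) :
    homDim X Y ≤ min X.card Y.card ∧ condH X Y (homDim X Y) := by
  have hne : {d | d ≤ min X.card Y.card ∧ PrecLE (smallSet X d) (largeSet Y d)}.Nonempty :=
    ⟨0, mem_homDim_set_iff.mpr ⟨Nat.zero_le _, fun s hs => by omega⟩⟩
  have hbdd : BddAbove {d | d ≤ min X.card Y.card ∧ PrecLE (smallSet X d) (largeSet Y d)} :=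
    ⟨min X.card Y.card, fun d hd => hd.1⟩
  exact mem_homDim_set_iff.mp (Nat.sSup_mem hne hbdd)

private lemma le_homDim {X Y : Finset ℕ} {d : ℕ} (h1 : d ≤ min X.card Y.card)
    (h2 : condH X Y d) : d ≤ homDim X Y := by
  have hbdd : BddAbove {d | d ≤ min X.card Y.card ∧ PrecLE (smallSet X d) (largeSet Y d)} :=
    ⟨min X.card Y.card, fun d hd => hd.1⟩
  exact le_csSup hbdd (mem_homDim_set_iff.mpr ⟨h1, h2⟩)

/-- Helper: the first `idx+1` elements of `Y` are all at most the element at index `idx`. -/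
private lemma card_filter_le_ge (Y : Finset ℕ) {idx : ℕ} (h : idx < Y.card) :
    idx + 1 ≤ (Y.filter (· ≤ (Finset.sort Y (· ≤ ·)).getD idx 0)).card := by
  set l := Finset.sort Y (· ≤ ·) with hl
  have hlen : idx < l.length := by rwa [hl, Finset.length_sort]
  set T := (l.take (idx + 1)).toFinset with hT
  have hTnd : (l.take (idx + 1)).Nodup := (List.take_sublist _ _).nodup (Finset.sort_nodup _ _)
  have hTcard : T.card = idx + 1 := by
    rw [hT, List.toFinset_card_of_nodup hTnd, List.length_take, hl, Finset.length_sort]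
    omega
  have hTsub : T ⊆ Y.filter (· ≤ l.getD idx 0) := by
    intro y hy
    rw [hT, List.mem_toFinset] at hy
    obtain ⟨i, hi, hia⟩ := List.mem_iff_getElem.mp hy
    have hi' : i < idx + 1 := lt_of_lt_of_le hi (by simp [List.length_take])
    have hyl : y ∈ l := (List.take_sublist _ _).mem hy
    refine Finset.mem_filter.mpr ⟨(Finset.mem_sort _).mp hyl, ?_⟩
    have hgi : (l.take (idx + 1))[i] = l[i]'(by omega) := List.getElem_take
    rw [← hia, hgi]
    calc l[i]'(by omega) = l.getD i 0 := (List.getD_eq_getElem _ 0 (by omega)).symm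
      _ ≤ l.getD idx 0 := sorted_getD_mono (Finset.pairwise_sort _ _) (by omega) hlen
  calc idx + 1 = T.card := hTcard.symm
    _ ≤ _ := Finset.card_le_card hTsub

/-- If neither `I \ J < J \ I` fails appropriately: a crossing pair gives `condH X Y (c+1)`. -/
private lemma cond_succ_of_cross (X Y : Finset ℕ) {a b : ℕ} (haX : a ∈ X) (haY : a ∉ Y)
    (hbY : b ∈ Y) (hbX : b ∉ X) (hab : a < b) :
    (X ∩ Y).card + 1 ≤ min X.card Y.card ∧ condH X Y ((X ∩ Y).card + 1) := by
  set c := (X ∩ Y).card with hc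
  have haI : a ∉ X ∩ Y := fun h => haY (Finset.mem_inter.mp h).2
  have hbI : b ∉ X ∩ Y := fun h => hbX (Finset.mem_inter.mp h).1
  have hcX : c + 1 ≤ X.card := by
    have h1 : insert a (X ∩ Y) ⊆ X := by
      intro y hy
      rcases Finset.mem_insert.mp hy with rfl | hy
      · exact haX
      · exact (Finset.mem_inter.mp hy).1
    have := Finset.card_le_card h1
    rwa [Finset.card_insert_of_notMem haI] at this
  have hcY : c + 1 ≤ Y.card := by
    have h1 : insert b (X ∩ Y) ⊆ Y := by
      intro y hy
      rcases Finset.mem_insert.mp hy with rfl | hy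
      · exact hbY
      · exact (Finset.mem_inter.mp hy).2
    have := Finset.card_le_card h1
    rwa [Finset.card_insert_of_notMem hbI] at this
  have hYX : (Y \ X).card = Y.card - c := by
    have h1 := Finset.card_inter_add_card_sdiff Y X
    rw [Finset.inter_comm] at h1
    omega
  refine ⟨le_min hcX hcY, fun s hs => ?_⟩
  set q := Y.card with hq
  set idx := q - (c + 1) + s with hidx
  have hidxq : idx < q := by omega
  set x := (Finset.sort Y (· ≤ ·)).getD idx 0 with hx
  set F := Y.filter (· ≤ x) with hF
  have hFcard : idx + 1 ≤ F.card := card_filter_le_ge Y hidxq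
  have hFX : (F ∩ X).card + (F \ X).card = F.card := Finset.card_inter_add_card_sdiff F X
  have key : s + 1 ≤ (X.filter (· ≤ x)).card := by
    by_cases hbx : b ≤ x
    · -- `a` gives an extra element of `X` below `x`
      have haF : a ∉ F ∩ X := fun h =>
        haY (Finset.mem_filter.mp (Finset.mem_inter.mp h).1).1
      have hsubG : insert a (F ∩ X) ⊆ X.filter (· ≤ x) := by
        intro y hy
        rcases Finset.mem_insert.mp hy with rfl | hy
        · exact Finset.mem_filter.mpr ⟨haX, le_of_lt (lt_of_lt_of_le hab hbx)⟩
        · obtain ⟨hyF, hyX⟩ := Finset.mem_inter.mp hy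
          exact Finset.mem_filter.mpr ⟨hyX, (Finset.mem_filter.mp hyF).2⟩
      have hdiff : (F \ X).card ≤ q - c := by
        have : F \ X ⊆ Y \ X := Finset.sdiff_subset_sdiff (Finset.filter_subset _ _)
          (le_refl _)
        have := Finset.card_le_card this
        omega
      have := Finset.card_le_card hsubG
      rw [Finset.card_insert_of_notMem haF] at this
      omega
    · -- `b` is not counted among the small elements of `Y`
      push_neg at hbx
      have hdiff : (F \ X).card ≤ q - c - 1 := by
        have hsub : F \ X ⊆ (Y \ X).erase b := by
          intro y hy
          obtain ⟨hyF, hyX⟩ := Finset.mem_sdiff.mp hy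
          obtain ⟨hyY, hyx⟩ := Finset.mem_filter.mp hyF
          refine Finset.mem_erase.mpr ⟨?_, Finset.mem_sdiff.mpr ⟨hyY, hyX⟩⟩
          exact fun h => absurd hbx (by omega)
        have := Finset.card_le_card hsub
        rw [Finset.card_erase_of_mem (Finset.mem_sdiff.mpr ⟨hbY, hbX⟩)] at this
        omega
      have hsub2 : F ∩ X ⊆ X.filter (· ≤ x) := by
        intro y hy
        obtain ⟨hyF, hyX⟩ := Finset.mem_inter.mp hy
        exact Finset.mem_filter.mpr ⟨hyX, (Finset.mem_filter.mp hyF).2⟩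
      have := Finset.card_le_card hsub2
      omega
  exact rankLeAux X (by omega)

/-- If `X \ Y < Y \ X` then `condH Y X (c+1)` fails. -/
private lemma not_cond_of_allLt (X Y : Finset ℕ) (h : allLt (X \ Y) (Y \ X))
    (hcX : (X ∩ Y).card < X.card) (hcY : (X ∩ Y).card < Y.card) :
    ¬ condH Y X ((X ∩ Y).card + 1) := by
  set c := (X ∩ Y).card with hc
  set p := X.card with hp
  set q := Y.card with hq
  have hYXc : (Y \ X).card = q - c := by
    have h1 := Finset.card_inter_add_card_sdiff Y X
    rw [Finset.inter_comm] at h1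
    omega
  have hXYc : (X \ Y).card = p - c := by
    have h1 := Finset.card_inter_add_card_sdiff X Y
    omega
  have hne : (Y \ X).Nonempty := Finset.card_pos.mp (by omega)
  set m := (Y \ X).min' hne with hm
  have hmY : m ∈ Y \ X := Finset.min'_mem _ hne
  set k := (Y.filter (· < m)).card with hk
  have hfilter_sub : Y.filter (· < m) ⊆ X ∩ Y := by
    intro y hy
    obtain ⟨hyY, hym⟩ := Finset.mem_filter.mp hy
    by_cases hyX : y ∈ X
    · exact Finset.mem_inter.mpr ⟨hyX, hyY⟩
    · exact absurd (Finset.min'_le _ y (Finset.mem_sdiff.mpr ⟨hyY, hyX⟩)) (by omega)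
  have hkc : k ≤ c := Finset.card_le_card hfilter_sub
  have h1 : m ≤ (Finset.sort Y (· ≤ ·)).getD k 0 :=
    le_getD_of_filter_le Y (by omega) (le_of_eq rfl)
  have h2 : (Finset.sort X (· ≤ ·)).getD (p - (c + 1) + k) 0 < m := by
    apply rankLtAux X
    have hsubG : (X \ Y) ∪ Y.filter (· < m) ⊆ X.filter (· < m) := by
      intro y hy
      rcases Finset.mem_union.mp hy with hy | hy
      · exact Finset.mem_filter.mpr ⟨(Finset.mem_sdiff.mp hy).1, h y hy m hmY⟩
      · exact Finset.mem_filter.mpr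
          ⟨(Finset.mem_inter.mp (hfilter_sub hy)).1, (Finset.mem_filter.mp hy).2⟩
    have hdisj : Disjoint (X \ Y) (Y.filter (· < m)) := by
      refine Finset.disjoint_left.mpr fun y hy1 hy2 => ?_
      exact (Finset.mem_sdiff.mp hy1).2 (Finset.mem_filter.mp hy2).1
    have := Finset.card_le_card hsubG
    rw [Finset.card_union_of_disjoint hdisj, hXYc] at this
    omega
  intro hcond
  have h3 := hcond k (by omega)
  rw [← hp] at h3
  omega

private lemma homDim_eq_inter_iff (X Y : Finset ℕ) :
    homDim X Y = (X ∩ Y).card ↔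
      ¬((X ∩ Y).card + 1 ≤ min X.card Y.card ∧ condH X Y ((X ∩ Y).card + 1)) := by
  set c := (X ∩ Y).card with hc
  have hcmin : c ≤ min X.card Y.card :=
    le_min (Finset.card_le_card Finset.inter_subset_left)
      (Finset.card_le_card Finset.inter_subset_right)
  have hcond_c : condH X Y c := by
    intro s hs
    set q := Y.card with hq
    have hcq : c ≤ q := le_trans hcmin (min_le_right _ _)
    set idx := q - c + s with hidx
    have hidxq : idx < q := by omega
    set x := (Finset.sort Y (· ≤ ·)).getD idx 0 with hx
    set F := Y.filter (· ≤ x) with hF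
    have hFcard : idx + 1 ≤ F.card := card_filter_le_ge Y hidxq
    have hFX : (F ∩ X).card + (F \ X).card = F.card := Finset.card_inter_add_card_sdiff F X
    have hYX : (Y \ X).card = q - c := by
      have h1 := Finset.card_inter_add_card_sdiff Y X
      rw [Finset.inter_comm] at h1
      omega
    have hdiff : (F \ X).card ≤ q - c := by
      have : F \ X ⊆ Y \ X := Finset.sdiff_subset_sdiff (Finset.filter_subset _ _) (le_refl _)
      have := Finset.card_le_card this
      omega
    have hsub2 : F ∩ X ⊆ X.filter (· ≤ x) := by
      intro y hy
      obtain ⟨hyF, hyX⟩ := Finset.mem_inter.mp hy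
      exact Finset.mem_filter.mpr ⟨hyX, (Finset.mem_filter.mp hyF).2⟩
    have := Finset.card_le_card hsub2
    exact rankLeAux X (by omega)
  have hge : c ≤ homDim X Y := le_homDim hcmin hcond_c
  obtain ⟨hbd, hcd⟩ := homDim_spec X Y
  constructor
  · intro heq
    rintro ⟨h1, h2⟩
    have := le_homDim h1 h2
    omega
  · intro hno
    by_contra hne
    have hgt : c + 1 ≤ homDim X Y := by omega
    exact hno ⟨le_trans hgt hbd, cond_mono hgt (le_trans hbd (min_le_right _ _)) hcd⟩

/-- **Strong separation via hom dimensions.**  For nonempty `I, J ⊆ [n]` with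
`|I| ≥ |J|`, the sets `I` and `J` are strongly separated if and only if
`h(I,J) = |I∩J|` or `h(J,I) = |I∩J|`.  (Equivalently, `Ext¹_D(M_J, M_I) = 0` or
`Ext¹_D(M_I, M_J) = 0`.) -/
theorem strongly_separated_iff_homDim (n : ℕ) (I J : Finset ℕ)
    (hI : I ⊆ Finset.Icc 1 n) (hJ : J ⊆ Finset.Icc 1 n)
    (hI0 : I.Nonempty) (hJ0 : J.Nonempty) (hcard : J.card ≤ I.card) :
    StronglySeparated I J ↔
      (homDim I J = (I ∩ J).card ∨ homDim J I = (I ∩ J).card) := by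
  have hinter : J ∩ I = I ∩ J := Finset.inter_comm J I
  constructor
  · rintro (h | h)
    · -- I \ J < J \ I :  homDim J I = c
      right
      rw [← hinter, homDim_eq_inter_iff]
      rintro ⟨h1, h2⟩
      rw [hinter] at h1 h2
      have hcJ : (I ∩ J).card < J.card := by
        have := le_trans h1 (min_le_left _ _); omega
      have hcI : (I ∩ J).card < I.card := by
        have := le_trans h1 (min_le_right _ _); omega
      exact not_cond_of_allLt I J h hcI hcJ h2
    · -- J \ I < I \ J :  homDim I J = c
      left
      rw [homDim_eq_inter_iff]
      rintro ⟨h1, h2⟩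
      have hcI : (I ∩ J).card < I.card := by
        have := le_trans h1 (min_le_left _ _); omega
      have hcJ : (I ∩ J).card < J.card := by
        have := le_trans h1 (min_le_right _ _); omega
      have := not_cond_of_allLt J I h (by rwa [hinter]) (by rwa [hinter])
      rw [hinter] at this
      exact this h2
  · intro hd
    by_contra hss
    rw [StronglySeparated, not_or] at hss
    obtain ⟨hss1, hss2⟩ := hss
    -- from ¬ (I \ J < J \ I): there are a ∈ I \ J, b ∈ J \ I with b < a
    rw [allLt] at hss1 hss2
    push_neg at hss1 hss2
    obtain ⟨a, haIJ, b, hbJI, hba⟩ := hss1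
    obtain ⟨b', hb'JI, a', ha'IJ, ha'b'⟩ := hss2
    obtain ⟨haI, haJ⟩ := Finset.mem_sdiff.mp haIJ
    obtain ⟨hbJ, hbI⟩ := Finset.mem_sdiff.mp hbJI
    obtain ⟨ha'I, ha'J⟩ := Finset.mem_sdiff.mp ha'IJ
    obtain ⟨hb'J, hb'I⟩ := Finset.mem_sdiff.mp hb'JI
    have hba' : b < a := by
      rcases Nat.lt_or_ge b a with h | h
      · exact h
      · have : a ≠ b := fun h => haJ (h ▸ hbJ)
        omega
    have ha'b'' : a' < b' := by
      rcases Nat.lt_or_ge a' b' with h | h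
      · exact h
      · have : a' ≠ b' := fun h => ha'J (h ▸ hb'J)
        omega
    -- crossing pairs give condH at c+1 in both directions
    have hIJ := cond_succ_of_cross I J ha'I ha'J hb'J hb'I ha'b''
    have hJI := cond_succ_of_cross J I hbJ hbI haI haJ hba'
    rcases hd with hd | hd
    · rw [homDim_eq_inter_iff] at hd
      exact hd hIJ
    · rw [← hinter, homDim_eq_inter_iff] at hd
      rw [hinter] at hd
      rw [hinter] at hJI
      exact hd hJI
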